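/- The function 𝔑 counting minimal atomic decompositions is supermodular on the partition lattice: for all partitions π, π' of a finite set X, 𝔑(π) + 𝔑(π') ≤ 𝔑(π ∧ π') + 𝔑(π ∨ π'). -/

import Mathlib

variable {X : Type*} [Fintype X] [DecidableEq X]

/-- The atom of the partition lattice whose only nonsingleton block is `{x, y}`. -/
def pairSetoid (x y : X) : Setoid X where
  r a b := a = b ∨ (a = x ∧ b = y) ∨ (a = y ∧ b = x)
  iseqv := by
    refine ⟨fun a => Or.inl rfl, ?_, ?_⟩
    · intro a b h; tauto
    · intro a b c h1 h2; aesop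

/-- `S` is an atomic decomposition of the partition `π`. -/
def IsAtomicDecomp (π : Setoid X) (S : Set (Setoid X)) : Prop :=
  (∀ a ∈ S, IsAtom a) ∧ sSup S = π

/-- `S` is a minimal atomic decomposition of `π`. -/
def IsMinAtomicDecomp (π : Setoid X) (S : Set (Setoid X)) : Prop :=
  IsAtomicDecomp π S ∧ ∀ T ⊂ S, ¬ IsAtomicDecomp π T

/-- `𝔑 π`: the number of minimal atomic decompositions of `π`. -/
noncomputable def numMinDecomp (π : Setoid X) : ℕ :=
  {S | IsMinAtomicDecomp π S}.ncard

/-- The graph on `X` whose edges are the nonsingleton blocks of the atoms in `S`. -/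
def atomGraph (S : Set (Setoid X)) : SimpleGraph X where
  Adj a b := a ≠ b ∧ pairSetoid a b ∈ S
  symm := by
    constructor
    intro a b ⟨h1, h2⟩
    refine ⟨h1.symm, ?_⟩
    have h : pairSetoid b a = pairSetoid a b := by
      apply Setoid.ext; intro u v
      show _ ∨ _ ↔ _ ∨ _; tauto
    rw [h]; exact h2
  loopless := by constructor; intro a ⟨h, _⟩; exact h rfl

/-!
Every atom of `Π(X)` is a `pairSetoid x y`, and joining with it merges at most two classes. Hence
the atoms form a matroid (the cycle matroid of the complete graph on `X`) whose rank at a join is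
`|X|` minus its number of classes; this rank is submodular, and the minimal atomic decompositions
of `π` are the bases of `[⊥, π]`.

Extend `π` and `π'` to `π ⊔ π'` by bases `A`, `A'` of `[π, π ⊔ π']` and `[π', π ⊔ π']`. Then
`S ↦ S ∪ A` and `S' ↦ S' ∪ A'` embed the decompositions of `π` and `π'` into those of `π ⊔ π'`.
When `S ∪ A = S' ∪ A'`, the set `S ∩ S'` is independent, and submodularity of the rank makes it
large enough to decompose `π ⊓ π'`. Inclusion–exclusion for the two images gives the inequality.
-/

set_option linter.unusedSectionVars false

open Set

instance : Finite (Setoid X) :=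
  Finite.of_injective (fun s : Setoid X => s.r) fun _ _ h =>
    Setoid.ext fun a b => iff_of_eq (congrFun₂ h a b)

theorem Set.ncard_add_ncard_le_of_injOn {α β γ δ : Type*} {s : Set α} {t : Set β} {u : Set γ}
    {v : Set δ} {f : α → γ} {g : β → γ} {h : γ → δ} (hf : InjOn f s) (hg : InjOn g t)
    (hfu : MapsTo f s u) (hgu : MapsTo g t u) (hh : InjOn h (f '' s ∩ g '' t))
    (hhv : MapsTo h (f '' s ∩ g '' t) v) (hu : u.Finite) (hv : v.Finite) :
    s.ncard + t.ncard ≤ v.ncard + u.ncard := by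
  have hstu : f '' s ∪ g '' t ⊆ u := union_subset hfu.image_subset hgu.image_subset
  calc s.ncard + t.ncard = (f '' s).ncard + (g '' t).ncard := by
        rw [hf.ncard_image, hg.ncard_image]
    _ = (f '' s ∩ g '' t).ncard + (f '' s ∪ g '' t).ncard :=
        (ncard_inter_add_ncard_union _ _ (hu.subset (subset_union_left.trans hstu))
          (hu.subset (subset_union_right.trans hstu))).symm
    _ ≤ v.ncard + u.ncard :=
        add_le_add (ncard_le_ncard_of_injOn h hhv hh hv) (ncard_le_ncard hstu hu)

theorem pairSetoid_le_iff {x y : X} {σ : Setoid X} : pairSetoid x y ≤ σ ↔ σ.r x y := by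
  refine ⟨fun h => h (Or.inr (Or.inl ⟨rfl, rfl⟩)), fun h a b hab => ?_⟩
  rcases hab with rfl | ⟨rfl, rfl⟩ | ⟨rfl, rfl⟩
  exacts [σ.refl' a, h, σ.symm' h]

theorem pairSetoid_ne_bot {x y : X} (hxy : x ≠ y) : pairSetoid x y ≠ ⊥ := fun h =>
  hxy (pairSetoid_le_iff.mp h.le)

theorem isAtom_pairSetoid {x y : X} (hxy : x ≠ y) : IsAtom (pairSetoid x y) := by
  refine ⟨pairSetoid_ne_bot hxy, fun σ hlt => Setoid.ext fun a b => ⟨fun hab => ?_, ?_⟩⟩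
  · have hxyσ : ¬ σ.r x y := fun h => hlt.not_ge (pairSetoid_le_iff.mpr h)
    rcases hlt.le hab with rfl | ⟨rfl, rfl⟩ | ⟨rfl, rfl⟩
    exacts [rfl, absurd hab hxyσ, absurd (σ.symm' hab) hxyσ]
  · rintro rfl
    exact σ.refl' a

theorem IsAtom.exists_eq_pairSetoid {a : Setoid X} (ha : IsAtom a) :
    ∃ x y, x ≠ y ∧ a = pairSetoid x y := by
  obtain ⟨x, y, hr, hxy⟩ : ∃ x y, a.r x y ∧ x ≠ y := by
    by_contra! h
    exact ha.1 (Setoid.ext fun x y => ⟨h x y, fun hxy => hxy ▸ a.refl' x⟩)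
  refine ⟨x, y, hxy, ?_⟩
  rcases ha.le_iff.mp (pairSetoid_le_iff.mpr hr) with h | h
  exacts [absurd h (pairSetoid_ne_bot hxy), h.symm]

theorem sSup_setOf_isAtom_le (τ : Setoid X) : sSup {a : Setoid X | IsAtom a ∧ a ≤ τ} = τ := by
  refine le_antisymm (sSup_le fun a ha => ha.2) fun x y hxy => ?_
  by_cases h : x = y
  · exact h ▸ Setoid.refl' _ x
  · exact pairSetoid_le_iff.mp (le_sSup ⟨isAtom_pairSetoid h, pairSetoid_le_iff.mpr hxy⟩)

def supPairSetoid (τ : Setoid X) (x y : X) : Setoid X where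
  r a b := τ.r a b ∨ (τ.r a x ∧ τ.r y b) ∨ (τ.r a y ∧ τ.r x b)
  iseqv := by
    refine ⟨fun a => Or.inl (τ.refl' a), ?_, ?_⟩
    · rintro a b (h | ⟨h1, h2⟩ | ⟨h1, h2⟩)
      · exact Or.inl (τ.symm' h)
      · exact Or.inr (Or.inr ⟨τ.symm' h2, τ.symm' h1⟩)
      · exact Or.inr (Or.inl ⟨τ.symm' h2, τ.symm' h1⟩)
    · rintro a b c (h | ⟨h1, h2⟩ | ⟨h1, h2⟩) (g | ⟨g1, g2⟩ | ⟨g1, g2⟩)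
      · exact Or.inl (τ.trans' h g)
      · exact Or.inr (Or.inl ⟨τ.trans' h g1, g2⟩)
      · exact Or.inr (Or.inr ⟨τ.trans' h g1, g2⟩)
      · exact Or.inr (Or.inl ⟨h1, τ.trans' h2 g⟩)
      · exact Or.inl (τ.trans' (τ.trans' h1 (τ.symm' g1)) (τ.trans' (τ.symm' h2) g2))
      · exact Or.inl (τ.trans' h1 g2)
      · exact Or.inr (Or.inr ⟨h1, τ.trans' h2 g⟩)
      · exact Or.inl (τ.trans' h1 g2)
      · exact Or.inl (τ.trans' (τ.trans' h1 (τ.symm' g1)) (τ.trans' (τ.symm' h2) g2))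

theorem sup_pairSetoid_eq (τ : Setoid X) (x y : X) : τ ⊔ pairSetoid x y = supPairSetoid τ x y := by
  refine le_antisymm (sup_le (fun a b h => Or.inl h) ?_) ?_
  · exact pairSetoid_le_iff.mpr (Or.inr (Or.inl ⟨τ.refl' x, τ.refl' y⟩))
  · have hτ : τ ≤ τ ⊔ pairSetoid x y := le_sup_left
    have hxy : (τ ⊔ pairSetoid x y).r x y := pairSetoid_le_iff.mp le_sup_right
    rintro a b (h | ⟨h1, h2⟩ | ⟨h1, h2⟩)
    · exact hτ h
    · exact Setoid.trans' _ (Setoid.trans' _ (hτ h1) hxy) (hτ h2)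
    · exact Setoid.trans' _ (Setoid.trans' _ (hτ h1) (Setoid.symm' _ hxy)) (hτ h2)

noncomputable def numClasses (σ : Setoid X) : ℕ := Nat.card (Quotient σ)

theorem numClasses_sup_pairSetoid_add_one {τ : Setoid X} {x y : X} (h : ¬ τ.r x y) :
    numClasses (τ ⊔ pairSetoid x y) + 1 = numClasses τ := by
  classical
  let F : {u : Quotient τ // u ≠ ⟦y⟧} → Quotient (τ ⊔ pairSetoid x y) :=
    fun u => Setoid.map_of_le le_sup_left u.1
  have hF : Function.Bijective F := by
    constructor
    · rintro ⟨u, hu⟩ ⟨v, hv⟩ huv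
      induction u using Quotient.ind with | _ a => ?_
      induction v using Quotient.ind with | _ b => ?_
      have hab : (supPairSetoid τ x y).r a b := sup_pairSetoid_eq τ x y ▸ Quotient.exact huv
      rcases hab with hab | ⟨-, hyb⟩ | ⟨hay, -⟩
      · exact Subtype.ext (Quotient.sound hab)
      · exact absurd (Quotient.sound (τ.symm' hyb)) hv
      · exact absurd (Quotient.sound hay) hu
    · rintro ⟨z⟩
      by_cases hzy : τ.r z y
      · refine ⟨⟨⟦x⟧, fun hx => h (Quotient.exact hx)⟩, Quotient.sound ?_⟩
        rw [sup_pairSetoid_eq]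
        exact Or.inr (Or.inl ⟨τ.refl' x, τ.symm' hzy⟩)
      · exact ⟨⟨⟦z⟧, fun hz => hzy (Quotient.exact hz)⟩, rfl⟩
  rw [numClasses, numClasses, ← Nat.card_eq_of_bijective F hF, ← Finite.card_option,
    Nat.card_congr (Equiv.optionSubtypeNe _)]

/-- A basis of `[σ, τ]` in the matroid of atoms: each atom of `A` merges two classes. -/
structure IsAtomExtension (σ τ : Setoid X) (A : Set (Setoid X)) : Prop where
  isAtom : ∀ a ∈ A, IsAtom a
  not_le : ∀ a ∈ A, ¬ a ≤ σ
  sup_sSup : σ ⊔ sSup A = τ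
  ncard_add_numClasses : A.ncard + numClasses τ = numClasses σ

theorem exists_subset_isAtomExtension (σ : Setoid X) {S : Set (Setoid X)}
    (hS : ∀ a ∈ S, IsAtom a) : ∃ T ⊆ S, IsAtomExtension σ (σ ⊔ sSup S) T := by
  induction S, S.toFinite using Set.Finite.induction_on with
  | empty => exact ⟨∅, subset_rfl, ⟨by simp, by simp, rfl, by simp⟩⟩
  | @insert a S haS _ ih =>
    obtain ⟨T, hTS, hT⟩ := ih fun b hb => hS b (.inr hb)
    have hsup : σ ⊔ sSup (insert a S) = σ ⊔ sSup T ⊔ a := by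
      rw [sSup_insert, hT.sup_sSup]; ac_rfl
    by_cases ha : a ≤ σ ⊔ sSup T
    · refine ⟨T, hTS.trans (subset_insert a S), ?_⟩
      rwa [hsup, sup_eq_left.mpr ha, hT.sup_sSup]
    obtain ⟨x, y, -, rfl⟩ := (hS a (.inl rfl)).exists_eq_pairSetoid
    refine ⟨insert (pairSetoid x y) T, insert_subset_insert hTS, ⟨?_, ?_, ?_, ?_⟩⟩
    · rintro b (rfl | hb)
      exacts [hS _ (.inl rfl), hT.isAtom b hb]
    · rintro b (rfl | hb)
      exacts [fun h => ha (le_sup_of_le_left h), hT.not_le b hb]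
    · rw [hsup, sSup_insert]; ac_rfl
    · have hT' := hT.ncard_add_numClasses
      rw [← hT.sup_sSup] at hT'
      have := numClasses_sup_pairSetoid_add_one (ha ∘ pairSetoid_le_iff.mpr)
      rw [ncard_insert_of_notMem (fun h => haS (hTS h)), hsup]
      omega

theorem numClasses_le_numClasses_sup_sSup_add_ncard {B : Set (Setoid X)}
    (hB : ∀ a ∈ B, IsAtom a) (τ : Setoid X) :
    numClasses τ ≤ numClasses (τ ⊔ sSup B) + B.ncard := by
  obtain ⟨T, hTB, hT⟩ := exists_subset_isAtomExtension τ hB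
  have := ncard_le_ncard hTB
  have := hT.ncard_add_numClasses
  omega

theorem exists_isAtomExtension {σ τ : Setoid X} (h : σ ≤ τ) : ∃ A, IsAtomExtension σ τ A := by
  obtain ⟨A, -, hA⟩ :=
    exists_subset_isAtomExtension σ (S := {a | IsAtom a ∧ a ≤ τ}) fun a ha => ha.1
  rw [sSup_setOf_isAtom_le, sup_eq_right.mpr h] at hA
  exact ⟨A, hA⟩

theorem eq_of_le_of_numClasses_le {σ τ : Setoid X} (h : σ ≤ τ)
    (hc : numClasses σ ≤ numClasses τ) : σ = τ := by
  obtain ⟨A, hA⟩ := exists_isAtomExtension h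
  have hA0 : A = ∅ := by
    rw [← ncard_eq_zero]
    have := hA.ncard_add_numClasses
    omega
  simpa [hA0] using hA.sup_sSup

theorem numClasses_add_numClasses_le (π π' : Setoid X) :
    numClasses π + numClasses π' ≤ numClasses (π ⊓ π') + numClasses (π ⊔ π') := by
  obtain ⟨B, hB⟩ := exists_isAtomExtension (inf_le_right : π ⊓ π' ≤ π')
  have hsup : π ⊔ π' = π ⊔ sSup B := by rw [← hB.sup_sSup, ← sup_assoc, sup_inf_self]
  have := numClasses_le_numClasses_sup_sSup_add_ncard hB.isAtom π
  have := hB.ncard_add_numClasses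
  rw [← hsup] at *
  omega

namespace IsAtomExtension

variable {σ τ ρ : Setoid X} {S A : Set (Setoid X)}

theorem disjoint (hS : IsAtomExtension σ τ S) (hA : IsAtomExtension τ ρ A) : Disjoint S A :=
  Set.disjoint_left.mpr fun a haS haA =>
    hA.not_le a haA (hS.sup_sSup ▸ le_sup_of_le_right (le_sSup haS))

theorem union (hS : IsAtomExtension σ τ S) (hA : IsAtomExtension τ ρ A) :
    IsAtomExtension σ ρ (S ∪ A) where
  isAtom a ha := ha.elim (hS.isAtom a) (hA.isAtom a)
  not_le a ha := ha.elim (hS.not_le a) fun haA h =>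
    hA.not_le a haA (h.trans (hS.sup_sSup ▸ le_sup_left))
  sup_sSup := by rw [sSup_union, ← sup_assoc, hS.sup_sSup, hA.sup_sSup]
  ncard_add_numClasses := by
    rw [ncard_union_eq (hS.disjoint hA), add_assoc, hA.ncard_add_numClasses,
      hS.ncard_add_numClasses]

theorem union_sdiff_cancel (hS : IsAtomExtension σ τ S) (hA : IsAtomExtension τ ρ A) :
    (S ∪ A) \ A = S :=
  (hS.disjoint hA).sup_sdiff_cancel_right

theorem injOn_union (hA : IsAtomExtension τ ρ A) :
    InjOn (· ∪ A) {S | IsAtomExtension σ τ S} :=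
  LeftInvOn.injOn (f₁' := (· \ A)) fun _ hS => union_sdiff_cancel hS hA

theorem subset {T : Set (Setoid X)} (hT : IsAtomExtension σ τ T) (hST : S ⊆ T) :
    IsAtomExtension σ (σ ⊔ sSup S) S := by
  refine ⟨fun a ha => hT.isAtom a (hST ha), fun a ha => hT.not_le a (hST ha), rfl, ?_⟩
  have hlow := numClasses_le_numClasses_sup_sSup_add_ncard (fun a ha => hT.isAtom a (hST ha)) σ
  have hup := numClasses_le_numClasses_sup_sSup_add_ncard (B := T \ S)
    (fun a ha => hT.isAtom a ha.1) (σ ⊔ sSup S)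
  rw [sup_assoc, ← sSup_union, Set.union_sdiff_cancel hST, hT.sup_sSup] at hup
  have := ncard_sdiff_add_ncard_of_subset hST
  have := hT.ncard_add_numClasses
  omega

theorem inter {π π' : Setoid X} {S' : Set (Setoid X)} (hS : IsAtomExtension σ π S)
    (hS' : IsAtomExtension σ π' S') (hA : IsAtomExtension π (π ⊔ π') A) (hS'A : S' ⊆ S ∪ A) :
    IsAtomExtension σ (π ⊓ π') (S ∩ S') := by
  have hT := hS.union hA
  have hU := hT.subset (union_subset subset_union_left hS'A)
  have hI := hT.subset (S := S ∩ S') (inter_subset_left.trans subset_union_left)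
  rw [sSup_union, sup_sup_distrib_left, hS.sup_sSup, hS'.sup_sSup] at hU
  have hle : σ ⊔ sSup (S ∩ S') ≤ π ⊓ π' := by
    refine sup_le (le_inf ?_ ?_) (sSup_le fun a ha => le_inf ?_ ?_)
    exacts [hS.sup_sSup ▸ le_sup_left, hS'.sup_sSup ▸ le_sup_left,
      hS.sup_sSup ▸ le_sup_of_le_right (le_sSup ha.1),
      hS'.sup_sSup ▸ le_sup_of_le_right (le_sSup ha.2)]
  have := ncard_inter_add_ncard_union S S'
  have := numClasses_add_numClasses_le π π'
  have := hS.ncard_add_numClasses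
  have := hS'.ncard_add_numClasses
  have := hU.ncard_add_numClasses
  have := hI.ncard_add_numClasses
  rwa [← eq_of_le_of_numClasses_le hle (by omega)]

end IsAtomExtension

theorem isMinAtomicDecomp_iff {π : Setoid X} {S : Set (Setoid X)} :
    IsMinAtomicDecomp π S ↔ IsAtomExtension ⊥ π S := by
  constructor
  · rintro ⟨⟨hatoms, hsup⟩, hmin⟩
    obtain ⟨T, hTS, hT⟩ := exists_subset_isAtomExtension ⊥ hatoms
    rw [bot_sup_eq, hsup] at hT
    obtain rfl | hTS := hTS.eq_or_ssubset
    · exact hT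
    · exact absurd ⟨hT.isAtom, by simpa using hT.sup_sSup⟩ (hmin T hTS)
  · intro hS
    refine ⟨⟨hS.isAtom, by simpa using hS.sup_sSup⟩, fun T hTS ⟨hatoms, hsup⟩ => ?_⟩
    have := numClasses_le_numClasses_sup_sSup_add_ncard hatoms ⊥
    have := ncard_lt_ncard hTS
    have := hS.ncard_add_numClasses
    rw [bot_sup_eq, hsup] at *
    omega

theorem numMinDecomp_eq_ncard (π : Setoid X) :
    numMinDecomp π = {S | IsAtomExtension ⊥ π S}.ncard := by
  simp only [numMinDecomp, isMinAtomicDecomp_iff]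

/-- `𝔑` is supermodular on the partition lattice. -/
theorem numMinDecomp_supermodular (π π' : Setoid X) :
    numMinDecomp π + numMinDecomp π' ≤ numMinDecomp (π ⊓ π') + numMinDecomp (π ⊔ π') := by
  simp only [numMinDecomp_eq_ncard]
  obtain ⟨A, hA⟩ := exists_isAtomExtension (le_sup_left : π ≤ π ⊔ π')
  obtain ⟨A', hA'⟩ := exists_isAtomExtension (le_sup_right : π' ≤ π ⊔ π')
  refine ncard_add_ncard_le_of_injOn (h := (· \ (A ∪ A'))) hA.injOn_union hA'.injOn_union
    (fun S hS => hS.union hA) (fun S' hS' => hS'.union hA') ?_ ?_ (toFinite _) (toFinite _)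
  · refine LeftInvOn.injOn (f₁' := (· ∪ (A ∪ A'))) ?_
    rintro _ ⟨⟨S, -, rfl⟩, S', -, hT⟩
    exact sdiff_union_of_subset (union_subset subset_union_right (hT ▸ subset_union_right))
  · rintro _ ⟨⟨S, hS, rfl⟩, S', hS', hT⟩
    change S' ∪ A' = S ∪ A at hT
    change (S ∪ A) \ (A ∪ A') ∈ _
    rw [← sdiff_inter_sdiff, hS.union_sdiff_cancel hA, ← hT, hS'.union_sdiff_cancel hA']
    exact hS.inter hS' hA (hT ▸ subset_union_left)
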